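/- arXiv:1808.10680 — 5 statements merged into one kernel-verified Lean document; each statement's English description precedes it below -/
import Mathlib

section
/- Let (Ω, F, ℙ) be a probability space, let P : Ω → ℝ be square-integrable, and let (P_ℓ)_{ℓ∈ℕ} be square-integrable real random variables on Ω (approximations of P on level ℓ), with the convention P_{-1} := 0. Let (C_ℓ)_{ℓ∈ℕ} be nonnegative reals (the cost of one sample of the difference P_ℓ − P_{ℓ−1}). Suppose there are positive constants α, β, γ, c₁, c₂, c₃ with α ≥ (1/2)·min(β, γ) such that for all ℓ ∈ ℕ: (1) |E[P_ℓ − P]| ≤ c₁·2^{−αℓ}; (2) Var[P_ℓ − P_{ℓ−1}] ≤ c₂·2^{−βℓ}; (3) C_ℓ ≤ c₃·2^{γℓ}. Then there exists a positive constant c₄ such that for every ε with 0 < ε < exp(−1) there exist L ∈ ℕ and positive integers N₀, …, N_L with the following property: for every family of real random variables (Y_ℓ^{(n)})_{0 ≤ ℓ ≤ L, 1 ≤ n ≤ N_ℓ} on Ω that is jointly independent and such that each Y_ℓ^{(n)} is identically distributed as P_ℓ − P_{ℓ−1}, the multilevel Monte Carlo estimator Q := ∑_{ℓ=0}^{L}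 (1/N_ℓ) ∑_{n=1}^{N_ℓ} Y_ℓ^{(n)} satisfies the mean square error bound E[(Q − E[P])²] ≤ ε², and the total cost satisfies ∑_{ℓ=0}^{L} N_ℓ·C_ℓ ≤ c₄·ε^{−2} if β > γ, ∑_{ℓ=0}^{L} N_ℓ·C_ℓ ≤ c₄·ε^{−2}·(log ε)² if β = γ, and ∑_{ℓ=0}^{L} N_ℓ·C_ℓ ≤ c₄·ε^{−2−(γ−β)/α} if β < γ. -/
/-!
Choose the number of levels `L` so that the bias `c₁ 2^{-αL}` is at most `ε/√2`, and sample sizes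
`N_ℓ ∝ √(V_ℓ / C_ℓ)` (the Lagrange optimum for the cost at fixed variance) so that the variance
`∑ V_ℓ / N_ℓ` of the independent-sample estimator is at most `ε²/2`; the mean square error is
variance plus squared bias. The cost is then at most `2 ε⁻² (∑ √(V_ℓ C_ℓ))² + ∑ C_ℓ`, where
`√(V_ℓ C_ℓ) ≲ 2^{(γ-β)ℓ/2}`: this geometric sum is bounded, of size `L + 1 ≲ |log ε|`, or
dominated by its last term `≲ ε^{-(γ-β)/(2α)}` according as `β > γ`, `β = γ` or `β < γ`, while
`∑ C_ℓ ≲ ε^{-γ/α}` is of lower order because `α ≥ min(β, γ)/2`.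
-/

open MeasureTheory ProbabilityTheory Finset Real

section Estimator

variable {Ω : Type*}

noncomputable def mlmcEstimator (L : ℕ) (N : ℕ → ℕ) (Y : ℕ → ℕ → Ω → ℝ) (ω : Ω) : ℝ :=
  ∑ ℓ ∈ range (L + 1), (1 / (N ℓ : ℝ)) * ∑ n ∈ range (N ℓ), Y ℓ n ω

theorem mlmcEstimator_eq_sum_sigma (L : ℕ) (N : ℕ → ℕ) (Y : ℕ → ℕ → Ω → ℝ) :
    mlmcEstimator L N Y = ∑ p ∈ (range (L + 1)).sigma (fun ℓ => range (N ℓ)),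
      fun ω => (1 / (N p.1 : ℝ)) * Y p.1 p.2 ω := by
  ext ω
  simp only [mlmcEstimator, Finset.sum_apply, mul_sum, sum_sigma]

def levelDiff (Pl : ℕ → Ω → ℝ) (ℓ : ℕ) : Ω → ℝ :=
  fun ω => if ℓ = 0 then Pl 0 ω else Pl ℓ ω - Pl (ℓ - 1) ω

variable [MeasurableSpace Ω] {μ : Measure Ω}

theorem integral_sub_sq_eq_variance_add [IsProbabilityMeasure μ] {X : Ω → ℝ} (hX : MemLp X 2 μ)
    (m : ℝ) :
    ∫ ω, (X ω - m) ^ 2 ∂μ = variance X μ + (∫ ω, X ω ∂μ - m) ^ 2 := by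
  have hXm : MemLp (fun ω => X ω - m) 2 μ := hX.sub (memLp_const m)
  rw [← variance_sub_const hX.aestronglyMeasurable m, variance_eq_sub hXm,
    integral_sub (hX.integrable one_le_two) (integrable_const m)]
  simp

theorem sum_integral_levelDiff {Pl : ℕ → Ω → ℝ} (hPl : ∀ ℓ, Integrable (Pl ℓ) μ) (L : ℕ) :
    ∑ ℓ ∈ range (L + 1), ∫ ω, levelDiff Pl ℓ ω ∂μ = ∫ ω, Pl L ω ∂μ := by
  induction L with
  | zero => simp [levelDiff]
  | succ L ih =>
    rw [sum_range_succ, ih]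
    simp only [levelDiff, Nat.add_one_ne_zero, if_false, Nat.add_sub_cancel]
    rw [integral_sub (hPl _) (hPl _)]
    ring

variable {L : ℕ} {N : ℕ → ℕ} {Y : ℕ → ℕ → Ω → ℝ} {D : ℕ → Ω → ℝ}

theorem integral_mlmcEstimator (hN : ∀ ℓ ≤ L, 0 < N ℓ)
    (hY : ∀ ℓ ≤ L, ∀ n < N ℓ, Integrable (Y ℓ n) μ)
    (hYD : ∀ ℓ ≤ L, ∀ n < N ℓ, IdentDistrib (Y ℓ n) (D ℓ) μ μ) :
    ∫ ω, mlmcEstimator L N Y ω ∂μ = ∑ ℓ ∈ range (L + 1), ∫ ω, D ℓ ω ∂μ := by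
  unfold mlmcEstimator
  rw [integral_finsetSum _ fun ℓ hℓ => (integrable_finsetSum _ fun n hn =>
    hY ℓ (Nat.lt_succ_iff.mp (mem_range.mp hℓ)) n (mem_range.mp hn)).const_mul _]
  refine sum_congr rfl fun ℓ hℓ => ?_
  have hℓL := Nat.lt_succ_iff.mp (mem_range.mp hℓ)
  rw [integral_const_mul, integral_finsetSum _ fun n hn => hY ℓ hℓL n (mem_range.mp hn),
    sum_congr rfl fun n hn => (hYD ℓ hℓL n (mem_range.mp hn)).integral_eq, sum_const,
    card_range, nsmul_eq_mul]
  have : (N ℓ : ℝ) ≠ 0 := by exact_mod_cast (hN ℓ hℓL).ne'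
  field_simp

theorem variance_mlmcEstimator (hY : ∀ ℓ ≤ L, ∀ n < N ℓ, MemLp (Y ℓ n) 2 μ)
    (hind : iIndepFun (fun p : {q : ℕ × ℕ // q.1 ≤ L ∧ q.2 < N q.1} => Y p.1.1 p.1.2) μ)
    (hYD : ∀ ℓ ≤ L, ∀ n < N ℓ, IdentDistrib (Y ℓ n) (D ℓ) μ μ) :
    variance (mlmcEstimator L N Y) μ = ∑ ℓ ∈ range (L + 1), variance (D ℓ) μ / N ℓ := by
  have mem_samples : ∀ p ∈ (range (L + 1)).sigma (fun ℓ => range (N ℓ)),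
      p.1 ≤ L ∧ p.2 < N p.1 := fun p hp => by
    simp only [mem_sigma, mem_range] at hp
    exact ⟨Nat.lt_succ_iff.mp hp.1, hp.2⟩
  rw [mlmcEstimator_eq_sum_sigma, IndepFun.variance_sum]
  · rw [sum_sigma]
    refine sum_congr rfl fun ℓ hℓ => ?_
    have hℓL := Nat.lt_succ_iff.mp (mem_range.mp hℓ)
    simp_rw [variance_const_mul]
    rw [sum_congr rfl fun n hn => by rw [(hYD ℓ hℓL n (mem_range.mp hn)).variance_eq],
      sum_const, card_range, nsmul_eq_mul]
    by_cases h : (N ℓ : ℝ) = 0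
    · simp [h]
    · field_simp
  · exact fun p hp => (hY _ (mem_samples p hp).1 _ (mem_samples p hp).2).const_mul _
  · intro p hp q hq hpq
    have hne : (⟨(p.1, p.2), mem_samples p hp⟩ : {q : ℕ × ℕ // q.1 ≤ L ∧ q.2 < N q.1})
        ≠ ⟨(q.1, q.2), mem_samples q hq⟩ := by
      intro h
      apply hpq
      obtain ⟨h₁, h₂⟩ := Prod.mk.inj (congrArg Subtype.val h)
      exact Sigma.ext h₁ (heq_of_eq h₂)
    exact (hind.indepFun hne).comp (measurable_const_mul _) (measurable_const_mul _)

theorem integral_mlmcEstimator_sub_sq [IsProbabilityMeasure μ] (hN : ∀ ℓ ≤ L, 0 < N ℓ)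
    (hY : ∀ ℓ ≤ L, ∀ n < N ℓ, MemLp (Y ℓ n) 2 μ)
    (hind : iIndepFun (fun p : {q : ℕ × ℕ // q.1 ≤ L ∧ q.2 < N q.1} => Y p.1.1 p.1.2) μ)
    (hYD : ∀ ℓ ≤ L, ∀ n < N ℓ, IdentDistrib (Y ℓ n) (D ℓ) μ μ) (m : ℝ) :
    ∫ ω, (mlmcEstimator L N Y ω - m) ^ 2 ∂μ
      = ∑ ℓ ∈ range (L + 1), variance (D ℓ) μ / N ℓ
        + (∑ ℓ ∈ range (L + 1), ∫ ω, D ℓ ω ∂μ - m) ^ 2 := by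
  have hQ : MemLp (mlmcEstimator L N Y) 2 μ := by
    rw [mlmcEstimator_eq_sum_sigma]
    refine memLp_finsetSum' _ fun p hp => (hY _ ?_ _ ?_).const_mul _
    all_goals simp only [mem_sigma, mem_range] at hp; omega
  rw [integral_sub_sq_eq_variance_add hQ, variance_mlmcEstimator hY hind hYD,
    integral_mlmcEstimator hN (fun ℓ hℓ n hn => (hY ℓ hℓ n hn).integrable one_le_two) hYD]

end Estimator

theorem exists_sampleSizes {ι : Type*} (s : Finset ι) {v c : ι → ℝ} (hv : ∀ i, 0 < v i)
    (hc : ∀ i, 0 < c i) {δ : ℝ} (hδ : 0 < δ) :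
    ∃ N : ι → ℕ, (∀ i, 0 < N i) ∧ ∑ i ∈ s, v i / N i ≤ δ ∧
      ∑ i ∈ s, N i * c i ≤ (∑ i ∈ s, √(v i * c i)) ^ 2 / δ + ∑ i ∈ s, c i := by
  set K := ∑ i ∈ s, √(v i * c i)
  have hK : 0 ≤ K := sum_nonneg fun i _ => sqrt_nonneg _
  -- the allocation `N i ∝ √(v i / c i)` minimises the cost for a prescribed variance
  set x : ι → ℝ := fun i => K / δ * √(v i / c i)
  have hx : ∀ i, 0 ≤ x i := fun i => by positivity
  have hvx : ∀ i, 0 < K → v i / x i = δ / K * √(v i * c i) := fun i hKpos => by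
    have := sqrt_pos.mpr (hv i); have := sqrt_pos.mpr (hc i)
    simp only [x, sqrt_div (hv i).le, sqrt_mul (hv i).le]
    nth_rw 1 [← mul_self_sqrt (hv i).le]
    field_simp
  have hcx : ∀ i, x i * c i = K / δ * √(v i * c i) := fun i => by
    have := sqrt_pos.mpr (hc i)
    simp only [x, sqrt_div (hv i).le, sqrt_mul (hv i).le]
    nth_rw 2 [← mul_self_sqrt (hc i).le]
    field_simp
  refine ⟨fun i => ⌊x i⌋₊ + 1, fun i => Nat.succ_pos _, ?_, ?_⟩
  · rcases s.eq_empty_or_nonempty with rfl | hs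
    · simpa using hδ.le
    have hKpos : 0 < K := sum_pos (fun i _ => sqrt_pos.mpr (mul_pos (hv i) (hc i))) hs
    calc ∑ i ∈ s, v i / ((⌊x i⌋₊ + 1 : ℕ) : ℝ)
        ≤ ∑ i ∈ s, v i / x i := sum_le_sum fun i _ => by
          have : 0 < x i := by have := hv i; have := hc i; positivity
          gcongr
          · exact (hv i).le
          · push_cast
            exact (Nat.lt_floor_add_one _).le
      _ = δ := by
          rw [sum_congr rfl fun i _ => hvx i hKpos, ← mul_sum]
          exact div_mul_cancel₀ δ hKpos.ne'
  · calc ∑ i ∈ s, ((⌊x i⌋₊ + 1 : ℕ) : ℝ) * c i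
        ≤ ∑ i ∈ s, (x i * c i + c i) := sum_le_sum fun i _ => by
          rw [← add_one_mul]
          gcongr
          · exact (hc i).le
          · push_cast
            exact add_le_add_left (Nat.floor_le (hx i)) 1
      _ = K ^ 2 / δ + ∑ i ∈ s, c i := by
          rw [sum_add_distrib, sum_congr rfl fun i _ => hcx i, ← mul_sum]
          ring

theorem exists_nat_mul_two_rpow_neg_le {α c δ : ℝ} (hα : 0 < α) (hc : 0 < c) (hδ : 0 < δ) :
    ∃ L : ℕ, c * 2 ^ (-(α * L)) ≤ δ ∧ (2 : ℝ) ^ (α * L) ≤ 2 ^ α * max 1 (c / δ) := by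
  set x := logb 2 (c / δ) / α
  have hαx : α * x = logb 2 (c / δ) := mul_div_cancel₀ _ hα.ne'
  have hcδ : 0 < c / δ := div_pos hc hδ
  refine ⟨⌈x⌉₊, ?_, ?_⟩
  · have hle : c / δ ≤ 2 ^ (α * ⌈x⌉₊) := by
      calc c / δ = 2 ^ (α * x) := by rw [hαx, rpow_logb two_pos (by norm_num) hcδ]
        _ ≤ 2 ^ (α * ⌈x⌉₊) := by
          gcongr
          · norm_num
          · exact Nat.le_ceil x
    rw [rpow_neg zero_le_two, ← div_eq_mul_inv, div_le_iff₀ (by positivity)]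
    rwa [div_le_iff₀ hδ, mul_comm] at hle
  · rcases le_or_gt x 0 with hx | hx
    · rw [Nat.ceil_eq_zero.mpr hx, Nat.cast_zero, mul_zero, rpow_zero]
      exact one_le_mul_of_one_le_of_one_le (one_le_rpow one_le_two hα.le) (le_max_left _ _)
    calc (2 : ℝ) ^ (α * ⌈x⌉₊) ≤ 2 ^ (α * x + α) := by
          gcongr
          · norm_num
          · nlinarith [Nat.ceil_lt_add_one hx.le]
      _ = 2 ^ α * (c / δ) := by
          rw [rpow_add two_pos, hαx, rpow_logb two_pos (by norm_num) hcδ, mul_comm]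
      _ ≤ 2 ^ α * max 1 (c / δ) := by gcongr; exact le_max_right _ _

theorem natCast_add_one_le_mul_neg_log {α B ε : ℝ} {L : ℕ} (hα : 0 < α) (hB : 1 ≤ B)
    (hε : 0 < ε) (hεe : ε < exp (-1)) (hL : (2 : ℝ) ^ (α * L) ≤ B / ε) :
    (L : ℝ) + 1 ≤ ((log B + 1) / (α * log 2) + 1) * -log ε := by
  have hlogε : 1 < -log ε := by
    have := (log_lt_iff_lt_exp hε).mpr hεe
    linarith
  have hlogB : 0 ≤ log B := log_nonneg hB
  have hlog2 : 0 < α * log 2 := mul_pos hα (log_pos one_lt_two)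
  have hlogL : α * log 2 * L ≤ log B + -log ε := by
    have := log_le_log (by positivity) hL
    rw [log_rpow two_pos, log_div (by positivity) hε.ne'] at this
    linarith
  have hL' : (L : ℝ) ≤ (log B + 1) / (α * log 2) * -log ε := by
    rw [div_mul_eq_mul_div, le_div_iff₀ hlog2]
    nlinarith
  nlinarith

theorem sum_two_rpow_le_of_neg {κ : ℝ} (hκ : κ < 0) (L : ℕ) :
    ∑ ℓ ∈ range (L + 1), (2 : ℝ) ^ (κ * ℓ) ≤ 1 / (1 - 2 ^ κ) := by
  simp_rw [rpow_mul_natCast zero_le_two]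
  have := geom_sum_Ico_le_of_lt_one (m := 0) (n := L + 1) (rpow_nonneg zero_le_two κ)
    (rpow_lt_one_of_one_lt_of_neg one_lt_two hκ)
  simpa using this

theorem sum_two_rpow_le_of_two_rpow_le {κ α M : ℝ} (hκ : 0 < κ) (hα : 0 < α) {L : ℕ}
    (hL : (2 : ℝ) ^ (α * L) ≤ M) :
    ∑ ℓ ∈ range (L + 1), (2 : ℝ) ^ (κ * ℓ) ≤ 2 ^ κ / (2 ^ κ - 1) * M ^ (κ / α) := by
  have ht : 1 < (2 : ℝ) ^ κ := one_lt_rpow one_lt_two hκ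
  have hlast : ((2 : ℝ) ^ κ) ^ L ≤ M ^ (κ / α) := by
    rw [← rpow_mul_natCast zero_le_two, show κ * L = α * L * (κ / α) by field_simp,
      rpow_mul zero_le_two]
    gcongr
  simp_rw [rpow_mul_natCast zero_le_two]
  calc ∑ ℓ ∈ range (L + 1), ((2 : ℝ) ^ κ) ^ ℓ = (((2 : ℝ) ^ κ) ^ L * 2 ^ κ - 1) / (2 ^ κ - 1) := by
        rw [geom_sum_eq ht.ne', pow_succ]
    _ ≤ ((2 : ℝ) ^ κ) ^ L * 2 ^ κ / (2 ^ κ - 1) := by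
        gcongr
        linarith
    _ ≤ 2 ^ κ / (2 ^ κ - 1) * M ^ (κ / α) := by
        rw [mul_comm, mul_div_right_comm]
        gcongr

section Rate

variable {α β γ ε B : ℝ}

theorem inv_sq_eq_rpow_neg_two (x : ℝ) : (x ^ 2)⁻¹ = x ^ (-2 : ℝ) := by
  rw [rpow_neg_ofNat, zpow_neg, zpow_ofNat]

theorem sq_sum_two_rpow_div_sq_le_of_neg {κ : ℝ} (hκ : κ < 0) (ε : ℝ) (L : ℕ) :
    (∑ ℓ ∈ range (L + 1), (2 : ℝ) ^ (κ * ℓ)) ^ 2 / ε ^ 2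
      ≤ (1 / (1 - 2 ^ κ)) ^ 2 * ε ^ (-2 : ℝ) := by
  rw [← inv_sq_eq_rpow_neg_two ε, ← div_eq_mul_inv]
  gcongr
  exact sum_two_rpow_le_of_neg hκ L

theorem sq_sum_two_rpow_div_sq_le_of_pos {κ : ℝ} (hκ : 0 < κ) (hα : 0 < α) (hB : 0 < B)
    (hε : 0 < ε) {L : ℕ} (hL : (2 : ℝ) ^ (α * L) ≤ B / ε) :
    (∑ ℓ ∈ range (L + 1), (2 : ℝ) ^ (κ * ℓ)) ^ 2 / ε ^ 2
      ≤ (2 ^ κ / (2 ^ κ - 1)) ^ 2 * B ^ (2 * κ / α) * ε ^ (-2 - 2 * κ / α) := by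
  have hS := sum_two_rpow_le_of_two_rpow_le hκ hα hL
  have hpow : ((B / ε) ^ (κ / α)) ^ 2 = B ^ (2 * κ / α) * ε ^ (-(2 * κ / α)) := by
    rw [← rpow_natCast, ← rpow_mul (by positivity), div_rpow hB.le hε.le, rpow_neg hε.le]
    ring_nf
  calc (∑ ℓ ∈ range (L + 1), (2 : ℝ) ^ (κ * ℓ)) ^ 2 / ε ^ 2
      ≤ (2 ^ κ / (2 ^ κ - 1) * (B / ε) ^ (κ / α)) ^ 2 / ε ^ 2 := by gcongr
    _ = (2 ^ κ / (2 ^ κ - 1)) ^ 2 * B ^ (2 * κ / α) * ε ^ (-2 - 2 * κ / α) := by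
      rw [mul_pow, hpow, show -2 - 2 * κ / α = -(2 * κ / α) + -2 by ring, rpow_add hε,
        ← inv_sq_eq_rpow_neg_two ε]
      ring

theorem sq_natCast_add_one_div_sq_le (hα : 0 < α) (hB : 1 ≤ B) (hε : 0 < ε)
    (hεe : ε < exp (-1)) {L : ℕ} (hL : (2 : ℝ) ^ (α * L) ≤ B / ε) :
    ((L : ℝ) + 1) ^ 2 / ε ^ 2
      ≤ ((log B + 1) / (α * log 2) + 1) ^ 2 * (ε ^ (-2 : ℝ) * log ε ^ 2) := by
  have hS := natCast_add_one_le_mul_neg_log hα hB hε hεe hL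
  rw [← inv_sq_eq_rpow_neg_two ε, ← neg_sq (log ε), div_eq_mul_inv]
  have : 0 ≤ (L : ℝ) + 1 := by positivity
  calc ((L : ℝ) + 1) ^ 2 * (ε ^ 2)⁻¹
      ≤ (((log B + 1) / (α * log 2) + 1) * -log ε) ^ 2 * (ε ^ 2)⁻¹ := by gcongr
    _ = _ := by ring

noncomputable def mlmcRate (α β γ ε : ℝ) : ℝ :=
  if γ < β then ε ^ (-2 : ℝ)
  else if β = γ then ε ^ (-2 : ℝ) * log ε ^ 2
  else ε ^ (-2 - (γ - β) / α)

theorem exists_sq_sum_two_rpow_div_sq_le_mlmcRate (hα : 0 < α) (hB : 1 ≤ B) :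
    ∃ K > 0, ∀ ε, 0 < ε → ε < exp (-1) → ∀ L : ℕ, (2 : ℝ) ^ (α * L) ≤ B / ε →
      (∑ ℓ ∈ range (L + 1), (2 : ℝ) ^ ((γ - β) / 2 * ℓ)) ^ 2 / ε ^ 2
        ≤ K * mlmcRate α β γ ε := by
  rcases lt_trichotomy γ β with hγβ | rfl | hβγ
  · have hκ : (γ - β) / 2 < 0 := by linarith
    have := rpow_lt_one_of_one_lt_of_neg one_lt_two hκ
    refine ⟨(1 / (1 - 2 ^ ((γ - β) / 2))) ^ 2, by positivity, fun ε _ _ L _ => ?_⟩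
    rw [mlmcRate, if_pos hγβ]
    exact sq_sum_two_rpow_div_sq_le_of_neg hκ ε L
  · have := log_nonneg hB
    have := log_pos one_lt_two
    refine ⟨((log B + 1) / (α * log 2) + 1) ^ 2, by positivity, fun ε hε hεe L hL => ?_⟩
    rw [mlmcRate, if_neg (lt_irrefl γ), if_pos rfl]
    simpa using sq_natCast_add_one_div_sq_le hα hB hε hεe hL
  · have hκ : 0 < (γ - β) / 2 := by linarith
    have := one_lt_rpow one_lt_two hκ
    refine ⟨(2 ^ ((γ - β) / 2) / (2 ^ ((γ - β) / 2) - 1)) ^ 2 * B ^ ((γ - β) / α),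
      by positivity, fun ε hε _ L hL => ?_⟩
    rw [mlmcRate, if_neg (not_lt.mpr hβγ.le), if_neg hβγ.ne]
    convert sq_sum_two_rpow_div_sq_le_of_pos hκ hα (by linarith) hε hL using 4 <;> ring

theorem rpow_neg_le_mlmcRate (hα : 0 < α) (hαβγ : 1 / 2 * min β γ ≤ α) (hε : 0 < ε)
    (hεe : ε < exp (-1)) : ε ^ (-(γ / α)) ≤ mlmcRate α β γ ε := by
  have hε1 : ε ≤ 1 := (hεe.trans (exp_lt_one_iff.mpr (by norm_num))).le
  have hle : ∀ e, γ ≤ α * e → ε ^ (-(γ / α)) ≤ ε ^ (-e) := fun e he =>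
    rpow_le_rpow_of_exponent_ge hε hε1 (neg_le_neg ((div_le_iff₀' hα).mpr he))
  unfold mlmcRate
  split_ifs with hγβ hβγ
  · rw [min_eq_right hγβ.le] at hαβγ
    exact hle 2 (by linarith)
  · subst hβγ
    rw [min_self] at hαβγ
    have hlog : 1 ≤ log ε ^ 2 := by
      have := (log_lt_iff_lt_exp hε).mpr hεe
      nlinarith
    exact (hle 2 (by linarith)).trans (le_mul_of_one_le_right (rpow_nonneg hε.le _) hlog)
  · rw [min_eq_left (not_lt.mp hγβ)] at hαβγ
    convert hle (2 + (γ - β) / α) (by rw [mul_add, mul_div_cancel₀ _ hα.ne']; linarith) using 2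
    ring

end Rate

theorem exists_mlmc_parameters {α β γ c₁ c₂ c₃ : ℝ} (hα : 0 < α) (hγ : 0 < γ) (hc₁ : 0 < c₁)
    (hc₂ : 0 < c₂) (hc₃ : 0 < c₃) (hαβγ : 1 / 2 * min β γ ≤ α) :
    ∃ c₄ > 0, ∀ ε, 0 < ε → ε < exp (-1) → ∃ (L : ℕ) (N : ℕ → ℕ), (∀ ℓ, 0 < N ℓ) ∧
      c₁ * (2 : ℝ) ^ (-(α * L)) ≤ ε / √2 ∧
      ∑ ℓ ∈ range (L + 1), c₂ * (2 : ℝ) ^ (-(β * ℓ)) / N ℓ ≤ ε ^ 2 / 2 ∧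
      ∑ ℓ ∈ range (L + 1), (N ℓ : ℝ) * (c₃ * (2 : ℝ) ^ (γ * ℓ)) ≤ c₄ * mlmcRate α β γ ε := by
  set B := (2 : ℝ) ^ α * max 1 (√2 * c₁)
  have hB : 1 ≤ B :=
    one_le_mul_of_one_le_of_one_le (one_le_rpow one_le_two hα.le) (le_max_left _ _)
  obtain ⟨K, hK, hS⟩ := exists_sq_sum_two_rpow_div_sq_le_mlmcRate (β := β) (γ := γ) hα hB
  set a := (2 : ℝ) ^ γ / (2 ^ γ - 1)
  have ha : 0 < a := by
    have := one_lt_rpow one_lt_two hγ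
    exact div_pos (by positivity) (by linarith)
  refine ⟨2 * c₂ * c₃ * K + c₃ * a * B ^ (γ / α), by positivity, fun ε hε hεe => ?_⟩
  have hε1 : ε ≤ 1 := (hεe.trans (exp_lt_one_iff.mpr (by norm_num))).le
  obtain ⟨L, hbias, hL⟩ := exists_nat_mul_two_rpow_neg_le hα hc₁ (δ := ε / √2) (by positivity)
  have hLB : (2 : ℝ) ^ (α * L) ≤ B / ε := by
    refine hL.trans (le_of_le_of_eq ?_ (mul_div_assoc _ _ _).symm)
    gcongr
    rw [div_div_eq_mul_div, mul_comm c₁]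
    exact max_le ((one_le_div hε).mpr (hε1.trans (le_max_left _ _)))
      (by gcongr; exact le_max_right _ _)
  obtain ⟨N, hN, hvar, hcost⟩ := exists_sampleSizes (range (L + 1))
    (v := fun ℓ : ℕ => c₂ * (2 : ℝ) ^ (-(β * ℓ))) (c := fun ℓ : ℕ => c₃ * (2 : ℝ) ^ (γ * ℓ))
    (fun _ => by positivity) (fun _ => by positivity) (δ := ε ^ 2 / 2) (by positivity)
  refine ⟨L, N, hN, hbias, hvar, hcost.trans ?_⟩
  have hsqrt : ∀ ℓ : ℕ, √(c₂ * (2 : ℝ) ^ (-(β * ℓ)) * (c₃ * (2 : ℝ) ^ (γ * ℓ)))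
      = √(c₂ * c₃) * 2 ^ ((γ - β) / 2 * ℓ) := fun ℓ => by
    have : (2 : ℝ) ^ (-(β * ℓ)) * 2 ^ (γ * ℓ) = (2 ^ ((γ - β) / 2 * ℓ)) ^ 2 := by
      rw [← rpow_add two_pos, ← rpow_natCast, ← rpow_mul zero_le_two]
      ring_nf
    rw [mul_mul_mul_comm, this, sqrt_mul (by positivity), sqrt_sq (by positivity)]
  have hT : ∑ ℓ ∈ range (L + 1), c₃ * (2 : ℝ) ^ (γ * ℓ)
      ≤ c₃ * a * B ^ (γ / α) * mlmcRate α β γ ε := by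
    rw [← mul_sum, mul_assoc, mul_assoc]
    gcongr
    calc ∑ ℓ ∈ range (L + 1), (2 : ℝ) ^ (γ * ℓ) ≤ a * (B / ε) ^ (γ / α) :=
          sum_two_rpow_le_of_two_rpow_le hγ hα hLB
      _ = a * (B ^ (γ / α) * ε ^ (-(γ / α))) := by
          rw [div_rpow (by positivity) hε.le, rpow_neg hε.le, div_eq_mul_inv]
      _ ≤ a * (B ^ (γ / α) * mlmcRate α β γ ε) := by
          gcongr
          exact rpow_neg_le_mlmcRate hα hαβγ hε hεe
  rw [sum_congr rfl fun ℓ _ => hsqrt ℓ, ← mul_sum, mul_pow, sq_sqrt (by positivity)]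
  calc c₂ * c₃ * (∑ ℓ ∈ range (L + 1), (2 : ℝ) ^ ((γ - β) / 2 * ℓ)) ^ 2 / (ε ^ 2 / 2)
        + ∑ ℓ ∈ range (L + 1), c₃ * (2 : ℝ) ^ (γ * ℓ)
      = 2 * c₂ * c₃ * ((∑ ℓ ∈ range (L + 1), (2 : ℝ) ^ ((γ - β) / 2 * ℓ)) ^ 2 / ε ^ 2)
        + ∑ ℓ ∈ range (L + 1), c₃ * (2 : ℝ) ^ (γ * ℓ) := by ring
    _ ≤ 2 * c₂ * c₃ * (K * mlmcRate α β γ ε) + c₃ * a * B ^ (γ / α) * mlmcRate α β γ ε := by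
        gcongr
        exact hS ε hε hεe L hLB
    _ = (2 * c₂ * c₃ * K + c₃ * a * B ^ (γ / α)) * mlmcRate α β γ ε := by ring

theorem mlmc_complexity_general
    {Ω : Type*} [MeasurableSpace Ω] (μ : Measure Ω) [IsProbabilityMeasure μ]
    (P : Ω → ℝ) (Pl : ℕ → Ω → ℝ) (C : ℕ → ℝ)
    (hP : MeasureTheory.MemLp P 2 μ) (hPl : ∀ ℓ, MeasureTheory.MemLp (Pl ℓ) 2 μ)
    (α β γ c₁ c₂ c₃ : ℝ)
    (hα : 0 < α) (hγ : 0 < γ)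
    (hc₁ : 0 < c₁) (hc₂ : 0 < c₂) (hc₃ : 0 < c₃)
    (hαβγ : (1 / 2) * min β γ ≤ α)
    (h1 : ∀ ℓ : ℕ, |∫ ω, (Pl ℓ ω - P ω) ∂μ| ≤ c₁ * (2 : ℝ) ^ (-(α * ℓ)))
    (h2 : ∀ ℓ : ℕ,
      variance (fun ω => if ℓ = 0 then Pl 0 ω else Pl ℓ ω - Pl (ℓ - 1) ω) μ
        ≤ c₂ * (2 : ℝ) ^ (-(β * ℓ)))
    (h3 : ∀ ℓ : ℕ, C ℓ ≤ c₃ * (2 : ℝ) ^ (γ * ℓ)) :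
    ∃ c₄ : ℝ, 0 < c₄ ∧
      ∀ ε : ℝ, 0 < ε → ε < Real.exp (-1) →
        ∃ (L : ℕ) (N : ℕ → ℕ),
          (∀ ℓ ≤ L, 0 < N ℓ) ∧
          (∀ Y : ℕ → ℕ → Ω → ℝ,
            (∀ ℓ ≤ L, ∀ n < N ℓ, MeasureTheory.MemLp (Y ℓ n) 2 μ) →
            iIndepFun
              (fun p : {q : ℕ × ℕ // q.1 ≤ L ∧ q.2 < N q.1} => Y p.1.1 p.1.2) μ →
            (∀ ℓ ≤ L, ∀ n < N ℓ,
              IdentDistrib (Y ℓ n)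
                (fun ω => if ℓ = 0 then Pl 0 ω else Pl ℓ ω - Pl (ℓ - 1) ω) μ μ) →
            ∫ ω, ((∑ ℓ ∈ Finset.range (L + 1),
                (1 / (N ℓ : ℝ)) * ∑ n ∈ Finset.range (N ℓ), Y ℓ n ω)
                - ∫ ω', P ω' ∂μ) ^ 2 ∂μ ≤ ε ^ 2) ∧
          ((β > γ →
              ∑ ℓ ∈ Finset.range (L + 1), (N ℓ : ℝ) * C ℓ ≤ c₄ * ε ^ (-2 : ℝ)) ∧
           (β = γ →
              ∑ ℓ ∈ Finset.range (L + 1), (N ℓ : ℝ) * C ℓ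
                ≤ c₄ * ε ^ (-2 : ℝ) * Real.log ε ^ 2) ∧
           (β < γ →
              ∑ ℓ ∈ Finset.range (L + 1), (N ℓ : ℝ) * C ℓ
                ≤ c₄ * ε ^ (-2 - (γ - β) / α))) := by
  obtain ⟨c₄, hc₄, hparams⟩ := exists_mlmc_parameters hα hγ hc₁ hc₂ hc₃ hαβγ
  refine ⟨c₄, hc₄, fun ε hε hεe => ?_⟩
  obtain ⟨L, N, hN, hbias, hvar, hcost⟩ := hparams ε hε hεe
  refine ⟨L, N, fun ℓ _ => hN ℓ, fun Y hY hind hYD => ?_, ?_⟩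
  · have hbias' : (∫ ω, Pl L ω ∂μ - ∫ ω, P ω ∂μ) ^ 2 ≤ ε ^ 2 / 2 := by
      rw [← integral_sub ((hPl L).integrable one_le_two) (hP.integrable one_le_two), ← sq_abs]
      calc |∫ ω, (Pl L ω - P ω) ∂μ| ^ 2 ≤ (ε / √2) ^ 2 := by gcongr; exact (h1 L).trans hbias
        _ = ε ^ 2 / 2 := by rw [div_pow, sq_sqrt zero_le_two]
    have hvar' : ∑ ℓ ∈ range (L + 1), variance (levelDiff Pl ℓ) μ / N ℓ ≤ ε ^ 2 / 2 :=
      (sum_le_sum fun ℓ _ => by gcongr; exact h2 ℓ).trans hvar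
    change ∫ ω, (mlmcEstimator L N Y ω - ∫ ω', P ω' ∂μ) ^ 2 ∂μ ≤ ε ^ 2
    rw [integral_mlmcEstimator_sub_sq (D := levelDiff Pl) (fun ℓ _ => hN ℓ) hY hind hYD,
      sum_integral_levelDiff fun ℓ => (hPl ℓ).integrable one_le_two]
    linarith
  · have hcost' : ∑ ℓ ∈ range (L + 1), (N ℓ : ℝ) * C ℓ ≤ c₄ * mlmcRate α β γ ε :=
      (sum_le_sum fun ℓ _ => by gcongr; exact h3 ℓ).trans hcost
    refine ⟨fun h => ?_, fun h => ?_, fun h => ?_⟩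
    · rwa [mlmcRate, if_pos h] at hcost'
    · rwa [mlmcRate, if_neg h.not_gt, if_pos h, ← mul_assoc] at hcost'
    · rwa [mlmcRate, if_neg h.not_gt, if_neg h.ne] at hcost'

/-- The multilevel Monte Carlo complexity theorem (Giles). Under the assumptions
(1) `|E[P_ℓ - P]| ≤ c₁·2^{-αℓ}`, (2) `Var[P_ℓ - P_{ℓ-1}] ≤ c₂·2^{-βℓ}` (with
`P_{-1} := 0`) and (3) `C_ℓ ≤ c₃·2^{γℓ}`, where `α ≥ (1/2)·min(β,γ)`, there is a
constant `c₄ > 0` such that for every `0 < ε < e⁻¹` there are a number of levels `L`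
and sample sizes `N₀, …, N_L ≥ 1` such that every MLMC estimator
`Q = ∑_{ℓ=0}^{L} (1/N_ℓ) ∑_{n=1}^{N_ℓ} Y_ℓ⁽ⁿ⁾` built from jointly independent
square-integrable samples `Y_ℓ⁽ⁿ⁾` identically distributed as `P_ℓ - P_{ℓ-1}`
has mean square error `E[(Q - E[P])²] ≤ ε²`, while the total cost `∑ N_ℓ C_ℓ` is
bounded by `c₄ε⁻²` if `β > γ`, by `c₄ε⁻²(log ε)²` if `β = γ`, and by
`c₄ε^{-2-(γ-β)/α}` if `β < γ`. -/
theorem mlmc_complexity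
    {Ω : Type*} [MeasurableSpace Ω] (μ : Measure Ω) [IsProbabilityMeasure μ]
    (P : Ω → ℝ) (Pl : ℕ → Ω → ℝ) (C : ℕ → ℝ)
    (hP : MeasureTheory.MemLp P 2 μ) (hPl : ∀ ℓ, MeasureTheory.MemLp (Pl ℓ) 2 μ)
    (hC : ∀ ℓ, 0 ≤ C ℓ)
    (α β γ c₁ c₂ c₃ : ℝ)
    (hα : 0 < α) (hβ : 0 < β) (hγ : 0 < γ)
    (hc₁ : 0 < c₁) (hc₂ : 0 < c₂) (hc₃ : 0 < c₃)
    (hαβγ : (1 / 2) * min β γ ≤ α)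
    (h1 : ∀ ℓ : ℕ, |∫ ω, (Pl ℓ ω - P ω) ∂μ| ≤ c₁ * (2 : ℝ) ^ (-(α * ℓ)))
    (h2 : ∀ ℓ : ℕ,
      variance (fun ω => if ℓ = 0 then Pl 0 ω else Pl ℓ ω - Pl (ℓ - 1) ω) μ
        ≤ c₂ * (2 : ℝ) ^ (-(β * ℓ)))
    (h3 : ∀ ℓ : ℕ, C ℓ ≤ c₃ * (2 : ℝ) ^ (γ * ℓ)) :
    ∃ c₄ : ℝ, 0 < c₄ ∧
      ∀ ε : ℝ, 0 < ε → ε < Real.exp (-1) →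
        ∃ (L : ℕ) (N : ℕ → ℕ),
          (∀ ℓ ≤ L, 0 < N ℓ) ∧
          (∀ Y : ℕ → ℕ → Ω → ℝ,
            (∀ ℓ ≤ L, ∀ n < N ℓ, MeasureTheory.MemLp (Y ℓ n) 2 μ) →
            iIndepFun
              (fun p : {q : ℕ × ℕ // q.1 ≤ L ∧ q.2 < N q.1} => Y p.1.1 p.1.2) μ →
            (∀ ℓ ≤ L, ∀ n < N ℓ,
              IdentDistrib (Y ℓ n)
                (fun ω => if ℓ = 0 then Pl 0 ω else Pl ℓ ω - Pl (ℓ - 1) ω) μ μ) →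
            ∫ ω, ((∑ ℓ ∈ Finset.range (L + 1),
                (1 / (N ℓ : ℝ)) * ∑ n ∈ Finset.range (N ℓ), Y ℓ n ω)
                - ∫ ω', P ω' ∂μ) ^ 2 ∂μ ≤ ε ^ 2) ∧
          ((β > γ →
              ∑ ℓ ∈ Finset.range (L + 1), (N ℓ : ℝ) * C ℓ ≤ c₄ * ε ^ (-2 : ℝ)) ∧
           (β = γ →
              ∑ ℓ ∈ Finset.range (L + 1), (N ℓ : ℝ) * C ℓ
                ≤ c₄ * ε ^ (-2 : ℝ) * Real.log ε ^ 2) ∧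
           (β < γ →
              ∑ ℓ ∈ Finset.range (L + 1), (N ℓ : ℝ) * C ℓ
                ≤ c₄ * ε ^ (-2 - (γ - β) / α))) :=
  mlmc_complexity_general μ P Pl C hP hPl α β γ c₁ c₂ c₃ hα hγ hc₁ hc₂ hc₃ hαβγ h1 h2 h3
end

section
/- Let ε > 0, L ∈ ℕ, and let V_ℓ > 0 and C_ℓ > 0 for ℓ = 0, …, L be positive reals. Then for every choice of positive reals n₀, …, n_L satisfying the variance constraint ∑_{ℓ=0}^{L} V_ℓ/n_ℓ ≤ ε²/2, the total cost satisfies ∑_{ℓ=0}^{L} n_ℓ·C_ℓ ≥ (2/ε²)·(∑_{ℓ=0}^{L} √(V_ℓ·C_ℓ))². In other words, the sample-size choice N_ℓ = (2/ε²)·√(V_ℓ/C_ℓ)·∑_{j=0}^{L} √(V_j·C_j) minimizes the total cost among all positive sample sizes satisfying the variance constraint. -/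
open Finset

/-! Cauchy–Schwarz applied to `√(V_ℓ C_ℓ) = √(V_ℓ / n_ℓ) · √(n_ℓ C_ℓ)` bounds
`(∑ √(V_ℓ C_ℓ))²` by the variance `∑ V_ℓ / n_ℓ` times the cost `∑ n_ℓ C_ℓ`;
dividing by the variance, which is at most `ε²/2`, gives the bound. -/

theorem sq_sum_sqrt_mul_le_sum_div_mul_sum {ι : Type*} (s : Finset ι) (V C n : ι → ℝ)
    (hV : ∀ i ∈ s, 0 ≤ V i) (hC : ∀ i ∈ s, 0 ≤ C i) (hn : ∀ i ∈ s, 0 < n i) :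
    (∑ i ∈ s, √(V i * C i)) ^ 2 ≤ (∑ i ∈ s, V i / n i) * ∑ i ∈ s, n i * C i := by
  refine sum_sq_le_sum_mul_sum_of_sq_le_mul s
    (fun i hi => div_nonneg (hV i hi) (hn i hi).le)
    (fun i hi => mul_nonneg (hn i hi).le (hC i hi)) fun i hi => ?_
  rw [Real.sq_sqrt (mul_nonneg (hV i hi) (hC i hi))]
  exact le_of_eq (by field_simp [(hn i hi).ne'])

theorem mlmc_cost_lower_bound_general
    (ε : ℝ) (L : ℕ) (V C : ℕ → ℝ)
    (hV : ∀ ℓ ≤ L, 0 < V ℓ) (hC : ∀ ℓ ≤ L, 0 < C ℓ)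
    (n : ℕ → ℝ) (hn : ∀ ℓ ≤ L, 0 < n ℓ)
    (hvar : ∑ ℓ ∈ Finset.range (L + 1), V ℓ / n ℓ ≤ ε ^ 2 / 2) :
    (2 / ε ^ 2) * (∑ ℓ ∈ Finset.range (L + 1), Real.sqrt (V ℓ * C ℓ)) ^ 2
      ≤ ∑ ℓ ∈ Finset.range (L + 1), n ℓ * C ℓ := by
  have mem_le {ℓ : ℕ} (hℓ : ℓ ∈ range (L + 1)) : ℓ ≤ L := Nat.lt_succ_iff.mp (mem_range.mp hℓ)
  have hvar_pos : 0 < ∑ ℓ ∈ range (L + 1), V ℓ / n ℓ :=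
    sum_pos (fun ℓ hℓ => div_pos (hV ℓ (mem_le hℓ)) (hn ℓ (mem_le hℓ))) nonempty_range_add_one
  calc (2 / ε ^ 2) * (∑ ℓ ∈ range (L + 1), √(V ℓ * C ℓ)) ^ 2
      ≤ (1 / ∑ ℓ ∈ range (L + 1), V ℓ / n ℓ) * (∑ ℓ ∈ range (L + 1), √(V ℓ * C ℓ)) ^ 2 := by
        gcongr ?_ * _
        rw [← one_div_div]
        exact one_div_le_one_div_of_le hvar_pos hvar
    _ ≤ ∑ ℓ ∈ range (L + 1), n ℓ * C ℓ := by
        rw [one_div_mul_eq_div, div_le_iff₀' hvar_pos]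
        exact sq_sum_sqrt_mul_le_sum_div_mul_sum _ V C n (fun ℓ hℓ => (hV ℓ (mem_le hℓ)).le)
          (fun ℓ hℓ => (hC ℓ (mem_le hℓ)).le) fun ℓ hℓ => hn ℓ (mem_le hℓ)

/-- Among all positive (real-valued) sample sizes `n_ℓ` satisfying the variance
constraint `∑ V_ℓ/n_ℓ ≤ ε²/2`, the total cost `∑ n_ℓ C_ℓ` is at least
`(2/ε²)·(∑ √(V_ℓ C_ℓ))²`; i.e. the choice `N_ℓ = (2/ε²)·√(V_ℓ/C_ℓ)·∑_j √(V_j C_j)`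
is cost-optimal. -/
theorem mlmc_cost_lower_bound
    (ε : ℝ) (hε : 0 < ε) (L : ℕ) (V C : ℕ → ℝ)
    (hV : ∀ ℓ ≤ L, 0 < V ℓ) (hC : ∀ ℓ ≤ L, 0 < C ℓ)
    (n : ℕ → ℝ) (hn : ∀ ℓ ≤ L, 0 < n ℓ)
    (hvar : ∑ ℓ ∈ Finset.range (L + 1), V ℓ / n ℓ ≤ ε ^ 2 / 2) :
    (2 / ε ^ 2) * (∑ ℓ ∈ Finset.range (L + 1), Real.sqrt (V ℓ * C ℓ)) ^ 2
      ≤ ∑ ℓ ∈ Finset.range (L + 1), n ℓ * C ℓ :=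
  mlmc_cost_lower_bound_general ε L V C hV hC n hn hvar
end

section
/- Let λ > 0 and let w > 0 satisfy the transcendental equation (λ²w² − 1)·sin(w) = 2λw·cos(w). Define b : ℝ → ℝ by b(x) := sin(wx) + λw·cos(wx) and θ := 2λ/(λ²w² + 1). Then for every x ∈ [0, 1], ∫_{0}^{1} exp(−|x − y|/λ)·b(y) dy = θ·b(x); that is, (θ, b) is an eigenvalue–eigenfunction pair of the integral operator on [0, 1] with exponential covariance kernel C(x, y) = exp(−|x − y|/λ). -/
/-!
Split the integral at `y = x`. On each side the kernel factors as `exp (∓x/λ) * exp (±y/λ)`, and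
`exp (c y) * (p sin (w y) + q cos (w y))` is an explicit antiderivative of `exp (c y) * b y` for
suitable `p, q`: for `c = 1/λ` one may take `(p, q) = (λ, 0)`, which vanishes at `y = 0`; for
`c = -1/λ` the coefficients are forced, and the boundary term at `y = 1` vanishes exactly when `w`
solves the transcendental equation. What remains is `(λ - p) sin (w x) - q cos (w x) = θ b x`.
-/

open Real Set intervalIntegral

theorem hasDerivAt_exp_mul_mul_sin_add_cos (c w p q y : ℝ) :
    HasDerivAt (fun t => exp (c * t) * (p * sin (w * t) + q * cos (w * t)))
      (exp (c * y) * ((c * p - w * q) * sin (w * y) + (c * q + w * p) * cos (w * y))) y := by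
  have hwt : HasDerivAt (fun t => w * t) w y := by simpa using (hasDerivAt_id y).const_mul w
  have hct : HasDerivAt (fun t => c * t) c y := by simpa using (hasDerivAt_id y).const_mul c
  exact (hct.exp.mul ((hwt.sin.const_mul p).add (hwt.cos.const_mul q))).congr_deriv
    (by simp only [Pi.add_apply]; ring)

theorem integral_exp_neg_abs_sub_div_mul {lam a c x : ℝ} {f F G : ℝ → ℝ} (hx : x ∈ Icc a c)
    (hf : IntervalIntegrable f MeasureTheory.volume a c)
    (hF : ∀ y ∈ Icc a c, HasDerivAt F (exp (lam⁻¹ * y) * f y) y)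
    (hG : ∀ y ∈ Icc a c, HasDerivAt G (exp (-lam⁻¹ * y) * f y) y) :
    ∫ y in a..c, exp (-|x - y| / lam) * f y
      = exp (-lam⁻¹ * x) * (F x - F a) + exp (lam⁻¹ * x) * (G c - G x) := by
  have hax : uIcc a x ⊆ Icc a c := by rw [uIcc_of_le hx.1]; exact Icc_subset_Icc_right hx.2
  have hxc : uIcc x c ⊆ Icc a c := by rw [uIcc_of_le hx.2]; exact Icc_subset_Icc_left hx.1
  have hweighted (k : ℝ → ℝ) (hk : Continuous k) {s t : ℝ} (hst : uIcc s t ⊆ Icc a c) :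
      IntervalIntegrable (fun y => k y * f y) MeasureTheory.volume s t :=
    (hf.mono_set (by rwa [uIcc_of_le (hx.1.trans hx.2)])).continuousOn_mul hk.continuousOn
  have hleft : ∫ y in a..x, exp (-|x - y| / lam) * f y = exp (-lam⁻¹ * x) * (F x - F a) := by
    have hkernel : EqOn (fun y => exp (-|x - y| / lam) * f y)
        (fun y => exp (-lam⁻¹ * x) * (exp (lam⁻¹ * y) * f y)) (uIcc a x) := by
      intro y hy
      rw [uIcc_of_le hx.1] at hy
      simp only [abs_of_nonneg (sub_nonneg.2 hy.2), ← mul_assoc, ← exp_add]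
      ring_nf
    rw [integral_congr hkernel, integral_const_mul,
      integral_eq_sub_of_hasDerivAt (fun y hy => hF y (hax hy)) (hweighted _ (by fun_prop) hax)]
  have hright : ∫ y in x..c, exp (-|x - y| / lam) * f y = exp (lam⁻¹ * x) * (G c - G x) := by
    have hkernel : EqOn (fun y => exp (-|x - y| / lam) * f y)
        (fun y => exp (lam⁻¹ * x) * (exp (-lam⁻¹ * y) * f y)) (uIcc x c) := by
      intro y hy
      rw [uIcc_of_le hx.2] at hy
      simp only [abs_of_nonpos (sub_nonpos.2 hy.1), ← mul_assoc, ← exp_add]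
      ring_nf
    rw [integral_congr hkernel, integral_const_mul,
      integral_eq_sub_of_hasDerivAt (fun y hy => hG y (hxc hy)) (hweighted _ (by fun_prop) hxc)]
  rw [← integral_add_adjacent_intervals (hweighted _ (by fun_prop) hax)
    (hweighted _ (by fun_prop) hxc), hleft, hright]

theorem kl_exponential_kernel_eigenpair_general
    (lam : ℝ) (hlam : 0 < lam) (w : ℝ)
    (hroot : (lam ^ 2 * w ^ 2 - 1) * Real.sin w = 2 * lam * w * Real.cos w)
    (b : ℝ → ℝ) (hb : b = fun x => Real.sin (w * x) + lam * w * Real.cos (w * x))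
    (θ : ℝ) (hθ : θ = 2 * lam / (lam ^ 2 * w ^ 2 + 1)) :
    ∀ x ∈ Set.Icc (0 : ℝ) 1,
      ∫ y in (0 : ℝ)..1, Real.exp (-|x - y| / lam) * b y = θ * b x := by
  intro x hx
  subst hb hθ
  have hD : lam ^ 2 * w ^ 2 + 1 ≠ 0 := by positivity
  set A := lam * (lam ^ 2 * w ^ 2 - 1) / (lam ^ 2 * w ^ 2 + 1) with hA
  set B := -(2 * lam ^ 2 * w) / (lam ^ 2 * w ^ 2 + 1) with hB
  have hF (y : ℝ) : HasDerivAt (fun t => exp (lam⁻¹ * t) * (lam * sin (w * t) + 0 * cos (w * t)))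
      (exp (lam⁻¹ * y) * (sin (w * y) + lam * w * cos (w * y))) y :=
    (hasDerivAt_exp_mul_mul_sin_add_cos _ _ _ _ y).congr_deriv (by field_simp; ring)
  have hG (y : ℝ) : HasDerivAt (fun t => exp (-lam⁻¹ * t) * (A * sin (w * t) + B * cos (w * t)))
      (exp (-lam⁻¹ * y) * (sin (w * y) + lam * w * cos (w * y))) y :=
    (hasDerivAt_exp_mul_mul_sin_add_cos _ _ _ _ y).congr_deriv (by rw [hA, hB]; field_simp; ring)
  have hboundary : A * sin (w * 1) + B * cos (w * 1) = 0 := by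
    rw [mul_one, hA, hB]; field_simp; linear_combination lam * hroot
  have hcoeff : lam * sin (w * x) - (A * sin (w * x) + B * cos (w * x))
      = 2 * lam / (lam ^ 2 * w ^ 2 + 1) * (sin (w * x) + lam * w * cos (w * x)) := by
    rw [hA, hB]; field_simp; ring
  have hexp : exp (-lam⁻¹ * x) * exp (lam⁻¹ * x) = 1 := by rw [← exp_add]; simp
  rw [integral_exp_neg_abs_sub_div_mul hx ((by fun_prop : Continuous _).intervalIntegrable _ _)
    (fun y _ => hF y) (fun y _ => hG y), hboundary]
  simp only [mul_zero, sin_zero, cos_zero, exp_zero, zero_mul, add_zero, sub_zero]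
  linear_combination (lam * sin (w * x) - (A * sin (w * x) + B * cos (w * x))) * hexp + hcoeff

/-- If `w > 0` solves the transcendental equation `(λ²w² - 1)·sin w = 2λw·cos w`,
then `b(x) = sin(wx) + λw·cos(wx)` is an eigenfunction, with eigenvalue
`θ = 2λ/(λ²w² + 1)`, of the integral operator on `[0,1]` with exponential
covariance kernel `C(x,y) = exp(-|x-y|/λ)`. -/
theorem kl_exponential_kernel_eigenpair
    (lam : ℝ) (hlam : 0 < lam) (w : ℝ) (hw : 0 < w)
    (hroot : (lam ^ 2 * w ^ 2 - 1) * Real.sin w = 2 * lam * w * Real.cos w)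
    (b : ℝ → ℝ) (hb : b = fun x => Real.sin (w * x) + lam * w * Real.cos (w * x))
    (θ : ℝ) (hθ : θ = 2 * lam / (lam ^ 2 * w ^ 2 + 1)) :
    ∀ x ∈ Set.Icc (0 : ℝ) 1,
      ∫ y in (0 : ℝ)..1, Real.exp (-|x - y| / lam) * b y = θ * b x :=
  kl_exponential_kernel_eigenpair_general lam hlam w hroot b hb θ hθ
end

section
/- Let λ > 0 and let n be a positive integer such that (n − 1/2)·π > 1/λ. Then there exists w in the open interval ((n − 1/2)·π, (n + 1/2)·π) satisfying the transcendental equation (λ²w² − 1)·sin(w) = 2λw·cos(w). In particular, the transcendental equation tan(w) = 2λw/(λ²w² − 1) has infinitely many positive real solutions. -/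
open Real Set

private lemma aux_exists (lam : ℝ) (hlam : 0 < lam) (m : ℕ)
    (hgt : ((m : ℝ) - 1 / 2) * Real.pi > 1 / lam) :
    ∃ w ∈ Set.Ioo (((m : ℝ) - 1 / 2) * Real.pi) (((m : ℝ) + 1 / 2) * Real.pi),
      (lam ^ 2 * w ^ 2 - 1) * Real.sin w = 2 * lam * w * Real.cos w := by
  have hπ := Real.pi_pos
  set a : ℝ := ((m : ℝ) - 1 / 2) * Real.pi with ha
  set b : ℝ := ((m : ℝ) + 1 / 2) * Real.pi with hb
  have hab : a < b := by
    apply mul_lt_mul_of_pos_right _ hπ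
    linarith
  have hla : 1 / lam < a := hgt
  have h0la : 0 < 1 / lam := by positivity
  have ha0 : 0 < a := h0la.trans hla
  have hlb : 1 / lam < b := hla.trans hab
  -- coefficients positive
  have hca : 0 < lam ^ 2 * a ^ 2 - 1 := by
    have : 1 < lam * a := by
      rw [div_lt_iff₀ hlam] at hla; nlinarith
    nlinarith
  have hcb : 0 < lam ^ 2 * b ^ 2 - 1 := by
    have : 1 < lam * b := by
      rw [div_lt_iff₀ hlam] at hlb; nlinarith
    nlinarith
  set f : ℝ → ℝ := fun w => (lam ^ 2 * w ^ 2 - 1) * Real.sin w - 2 * lam * w * Real.cos w with hf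
  have hcont : ContinuousOn f (Set.Icc a b) := by
    apply Continuous.continuousOn; fun_prop
  have hsa : Real.sin a = -Real.cos (m * Real.pi) := by
    rw [show a = (m : ℝ) * Real.pi - Real.pi / 2 by ring, Real.sin_sub_pi_div_two]
  have hcosa : Real.cos a = 0 := by
    rw [show a = (m : ℝ) * Real.pi - Real.pi / 2 by ring, Real.cos_sub_pi_div_two,
      Real.sin_nat_mul_pi]
  have hsb : Real.sin b = Real.cos (m * Real.pi) := by
    rw [show b = (m : ℝ) * Real.pi + Real.pi / 2 by ring, Real.sin_add_pi_div_two]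
  have hcosb : Real.cos b = 0 := by
    rw [show b = (m : ℝ) * Real.pi + Real.pi / 2 by ring, Real.cos_add_pi_div_two,
      Real.sin_nat_mul_pi, neg_zero]
  have hcm : Real.cos ((m : ℝ) * Real.pi) = (-1) ^ m := by
    simpa using Real.cos_nat_mul_pi_sub 0 m
  have hfa : f a = -((lam ^ 2 * a ^ 2 - 1) * (-1) ^ m) := by
    simp [hf, hsa, hcosa, hcm]
  have hfb : f b = (lam ^ 2 * b ^ 2 - 1) * (-1) ^ m := by
    simp [hf, hsb, hcosb, hcm]
  have key : ∃ w ∈ Set.Ioo a b, f w = 0 := by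
    rcases Nat.even_or_odd m with he | ho
    · have h1 : (-1 : ℝ) ^ m = 1 := he.neg_one_pow
      have : (0 : ℝ) ∈ Set.Ioo (f a) (f b) := by
        rw [hfa, hfb, h1]; constructor <;> nlinarith
      obtain ⟨w, hw, hw0⟩ := intermediate_value_Ioo hab.le hcont this
      exact ⟨w, hw, hw0⟩
    · have h1 : (-1 : ℝ) ^ m = -1 := ho.neg_one_pow
      have : (0 : ℝ) ∈ Set.Ioo (f b) (f a) := by
        rw [hfa, hfb, h1]; constructor <;> nlinarith
      obtain ⟨w, hw, hw0⟩ := intermediate_value_Ioo' hab.le hcont this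
      exact ⟨w, hw, hw0⟩
  obtain ⟨w, hw, hw0⟩ := key
  exact ⟨w, hw, by have := hw0; simp only [hf] at this; linarith⟩

/-- For every positive integer `n` with `(n - 1/2)·π > 1/λ`, the transcendental
equation `(λ²w² - 1)·sin w = 2λw·cos w` has a solution in the open interval
`((n - 1/2)·π, (n + 1/2)·π)`; in particular it has infinitely many positive
real solutions. -/
theorem transcendental_equation_solutions
    (lam : ℝ) (hlam : 0 < lam) (n : ℕ) (hn : 0 < n)
    (hgt : ((n : ℝ) - 1 / 2) * Real.pi > 1 / lam) :
    (∃ w ∈ Set.Ioo (((n : ℝ) - 1 / 2) * Real.pi) (((n : ℝ) + 1 / 2) * Real.pi),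
        (lam ^ 2 * w ^ 2 - 1) * Real.sin w = 2 * lam * w * Real.cos w) ∧
    {w : ℝ | 0 < w ∧
        (lam ^ 2 * w ^ 2 - 1) * Real.sin w = 2 * lam * w * Real.cos w}.Infinite := by
  have hπ := Real.pi_pos
  constructor
  · exact aux_exists lam hlam n hgt
  · apply Set.infinite_of_not_bddAbove
    rintro ⟨B, hB⟩
    obtain ⟨m, hm⟩ := exists_nat_gt (max (n : ℝ) (B / Real.pi + 1))
    have hmn : (n : ℝ) ≤ (m : ℝ) := le_of_lt (lt_of_le_of_lt (le_max_left _ _) hm)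
    have hmB : B / Real.pi + 1 < (m : ℝ) := lt_of_le_of_lt (le_max_right _ _) hm
    have hgtm : ((m : ℝ) - 1 / 2) * Real.pi > 1 / lam := by
      refine lt_of_lt_of_le hgt ?_
      apply mul_le_mul_of_nonneg_right _ hπ.le
      linarith
    obtain ⟨w, hw, hweq⟩ := aux_exists lam hlam m hgtm
    have hw0 : 0 < w := lt_trans (lt_trans (by positivity) hgtm) hw.1
    have hwB : B < w := by
      have : B / Real.pi < (m : ℝ) - 1 / 2 := by linarith
      have hB' : B < ((m : ℝ) - 1 / 2) * Real.pi := by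
        rw [div_lt_iff₀ hπ] at this; linarith
      exact hB'.trans hw.1
    exact absurd (hB ⟨hw0, hweq⟩) (not_le.mpr hwB)
end

section
/- Let γ > β be real numbers and c₂, c₃ > 0. Let (V_ℓ)_{ℓ∈ℕ} and (C_ℓ)_{ℓ∈ℕ} be nonnegative reals with V_ℓ ≤ c₂·2^{−βℓ} and C_ℓ ≤ c₃·2^{γℓ} for all ℓ. Then for every L ∈ ℕ, ∑_{ℓ=0}^{L} √(V_ℓ·C_ℓ) ≤ √(c₂·c₃)·2^{(γ−β)L/2}/(1 − 2^{−(γ−β)/2}); in particular the total cost of the optimally calibrated multilevel Monte Carlo estimator, (2/ε²)·(∑_{ℓ=0}^{L} √(V_ℓ·C_ℓ))², is bounded by (2c₂c₃/ε²)·2^{(γ−β)L}·(1 − 2^{−(γ−β)/2})^{−2}, so the dominant contribution comes from the finest level L. -/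
/-!
Under the assumed rates, each term satisfies `√(V_ℓ C_ℓ) ≤ √(c₂ c₃) · x^ℓ` with
`x = 2^{(γ-β)/2} > 1`, and a geometric sum with ratio `x > 1` is dominated by its last term:
`∑_{ℓ ≤ L} x^ℓ ≤ x^L / (1 - x⁻¹)`. Squaring gives the cost bound.
-/

open Finset

theorem geom_sum_range_succ_le_pow_div {x : ℝ} (hx : 1 < x) (n : ℕ) :
    ∑ i ∈ range (n + 1), x ^ i ≤ x ^ n / (1 - x⁻¹) := by
  have hsub : 0 < x - 1 := sub_pos.2 hx
  calc ∑ i ∈ range (n + 1), x ^ i = (x ^ (n + 1) - 1) / (x - 1) := geom_sum_eq hx.ne' _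
    _ ≤ x ^ (n + 1) / (x - 1) := by gcongr; linarith
    _ = x ^ n / (1 - x⁻¹) := by field_simp; ring

theorem Real.sum_range_succ_rpow_mul_natCast_le {b δ : ℝ} (hb : 1 < b) (hδ : 0 < δ) (n : ℕ) :
    ∑ i ∈ range (n + 1), b ^ (δ * i) ≤ b ^ (δ * n) / (1 - b ^ (-δ)) := by
  have hb0 : 0 ≤ b := zero_le_one.trans hb.le
  simp only [Real.rpow_mul_natCast hb0, Real.rpow_neg hb0]
  exact geom_sum_range_succ_le_pow_div (Real.one_lt_rpow hb hδ) n

theorem Real.sqrt_mul_le_of_le_rpow {V C a c β γ b x : ℝ} (hb : 0 < b) (hV0 : 0 ≤ V) (hC0 : 0 ≤ C)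
    (hV : V ≤ a * b ^ (-(β * x))) (hC : C ≤ c * b ^ (γ * x)) :
    √(V * C) ≤ √(a * c) * b ^ ((γ - β) * x / 2) :=
  calc √(V * C) ≤ √(a * b ^ (-(β * x)) * (c * b ^ (γ * x))) :=
        Real.sqrt_le_sqrt (mul_le_mul hV hC hC0 (hV0.trans hV))
    _ = √(a * c * b ^ ((γ - β) * x)) := by
        rw [sub_mul, sub_eq_neg_add, Real.rpow_add hb]; ring_nf
    _ = √(a * c) * b ^ ((γ - β) * x / 2) := by
        rw [Real.sqrt_mul' _ (by positivity), Real.sqrt_eq_rpow (b ^ _), ← Real.rpow_mul hb.le]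
        ring_nf

/-- In the regime `γ > β` (cost grows faster than the variance decays), the sum
`∑_{ℓ=0}^{L} √(V_ℓ C_ℓ)` is bounded by `√(c₂c₃)·2^{(γ-β)L/2}/(1 - 2^{-(γ-β)/2})`,
so the total cost `(2/ε²)·(∑ √(V_ℓ C_ℓ))²` of the optimally calibrated MLMC estimator
is bounded by `(2c₂c₃/ε²)·2^{(γ-β)L}·(1 - 2^{-(γ-β)/2})⁻²`: the dominant contribution
comes from the finest level `L`. -/
theorem mlmc_cost_gamma_gt_beta
    (β γ c₂ c₃ : ℝ) (hβγ : β < γ) (hc₂ : 0 < c₂) (hc₃ : 0 < c₃)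
    (V C : ℕ → ℝ) (hV0 : ∀ ℓ, 0 ≤ V ℓ) (hC0 : ∀ ℓ, 0 ≤ C ℓ)
    (hV : ∀ ℓ : ℕ, V ℓ ≤ c₂ * (2 : ℝ) ^ (-(β * ℓ)))
    (hC : ∀ ℓ : ℕ, C ℓ ≤ c₃ * (2 : ℝ) ^ (γ * ℓ)) :
    ∀ L : ℕ,
      (∑ ℓ ∈ Finset.range (L + 1), Real.sqrt (V ℓ * C ℓ)
        ≤ Real.sqrt (c₂ * c₃) * (2 : ℝ) ^ ((γ - β) * L / 2)
          / (1 - (2 : ℝ) ^ (-(γ - β) / 2))) ∧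
      ∀ ε : ℝ, 0 < ε →
        (2 / ε ^ 2) * (∑ ℓ ∈ Finset.range (L + 1), Real.sqrt (V ℓ * C ℓ)) ^ 2
          ≤ (2 * c₂ * c₃ / ε ^ 2) * (2 : ℝ) ^ ((γ - β) * L)
            * ((1 - (2 : ℝ) ^ (-(γ - β) / 2))⁻¹) ^ 2 := by
  intro L
  have hrate : ∀ x : ℝ, (γ - β) * x / 2 = (γ - β) / 2 * x := fun x ↦ by ring
  have hsum : ∑ ℓ ∈ range (L + 1), √(V ℓ * C ℓ)
      ≤ √(c₂ * c₃) * 2 ^ ((γ - β) * L / 2) / (1 - 2 ^ (-(γ - β) / 2)) :=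
    calc ∑ ℓ ∈ range (L + 1), √(V ℓ * C ℓ)
        ≤ ∑ ℓ ∈ range (L + 1), √(c₂ * c₃) * (2 : ℝ) ^ ((γ - β) * ℓ / 2) :=
          sum_le_sum fun ℓ _ ↦ Real.sqrt_mul_le_of_le_rpow two_pos (hV0 ℓ) (hC0 ℓ) (hV ℓ) (hC ℓ)
      _ ≤ √(c₂ * c₃) * ((2 : ℝ) ^ ((γ - β) * L / 2) / (1 - 2 ^ (-(γ - β) / 2))) := by
          rw [← mul_sum]
          gcongr
          simp only [hrate, neg_div]
          exact Real.sum_range_succ_rpow_mul_natCast_le one_lt_two (by linarith) L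
      _ = _ := (mul_div_assoc ..).symm
  refine ⟨hsum, fun ε _ ↦ ?_⟩
  calc (2 / ε ^ 2) * (∑ ℓ ∈ range (L + 1), √(V ℓ * C ℓ)) ^ 2
      ≤ (2 / ε ^ 2) * (√(c₂ * c₃) * 2 ^ ((γ - β) * L / 2) / (1 - 2 ^ (-(γ - β) / 2))) ^ 2 := by
        gcongr
    _ = _ := by
        rw [div_pow, mul_pow, Real.sq_sqrt (by positivity), ← Real.rpow_mul_natCast two_pos.le,
          Nat.cast_ofNat, div_mul_cancel₀ _ two_ne_zero]
        generalize 1 - (2 : ℝ) ^ (-(γ - β) / 2) = d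
        ring
end
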